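/- Let φ = (1+√5)/2, A(x,y,z) = (5−√5)yz⁵ + (5+√5)y⁵z − 20y³z³ + (10+10√5)x²yz³ + (10−10√5)x²y³z − 10x⁴yz, and V(x,y,z) = (φ²x² − y²)(φ²y² − z²)(φ²z² − x²). Then for all real x, y, z one has (∂V/∂x)·A(x,y,z) + (∂V/∂y)·A(y,z,x) + (∂V/∂z)·A(z,x,y) = 0; that is, V is a first integral of the icosahedral vector field (A(x,y,z), A(y,z,x), A(z,x,y))/(x²+y²+z²)². -/

import Mathlib

/-!
`V` is invariant under the cyclic permutation `(x, y, z) ↦ (y, z, x)`, so its three partial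
derivatives are one polynomial `∂V/∂x` evaluated at cyclically permuted arguments. Writing
`√5 = 2φ - 1` turns `A` and `∂V/∂x` into polynomials in `x, y, z, φ`, and the resulting
identity holds in any commutative ring in which `φ² = φ + 1`.
-/

/-- The golden ratio. -/
noncomputable def φ : ℝ := (1 + Real.sqrt 5) / 2

/-- The numerator of the first component of the icosahedral superflow's vector field. -/
noncomputable def A (x y z : ℝ) : ℝ :=
  (5 - Real.sqrt 5) * y * z ^ 5 + (5 + Real.sqrt 5) * y ^ 5 * z - 20 * y ^ 3 * z ^ 3
    + (10 + 10 * Real.sqrt 5) * x ^ 2 * y * z ^ 3 + (10 - 10 * Real.sqrt 5) * x ^ 2 * y ^ 3 * z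
    - 10 * x ^ 4 * y * z

/-- The degree-6 invariant of the icosahedral group. -/
noncomputable def V (x y z : ℝ) : ℝ :=
  (φ ^ 2 * x ^ 2 - y ^ 2) * (φ ^ 2 * y ^ 2 - z ^ 2) * (φ ^ 2 * z ^ 2 - x ^ 2)

section CommRing

variable {R : Type*} [CommRing R] (t : R)

def icosaNumerator (x y z : R) : R :=
  (6 - 2 * t) * y * z ^ 5 + (4 + 2 * t) * y ^ 5 * z - 20 * y ^ 3 * z ^ 3
    + 20 * t * x ^ 2 * y * z ^ 3 + (20 - 20 * t) * x ^ 2 * y ^ 3 * z - 10 * x ^ 4 * y * z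

def icosaInvariant (x y z : R) : R :=
  (t ^ 2 * x ^ 2 - y ^ 2) * (t ^ 2 * y ^ 2 - z ^ 2) * (t ^ 2 * z ^ 2 - x ^ 2)

def icosaInvariantDerivFst (x y z : R) : R :=
  2 * x * (t ^ 2 * (t ^ 2 * y ^ 2 - z ^ 2) * (t ^ 2 * z ^ 2 - x ^ 2)
    - (t ^ 2 * x ^ 2 - y ^ 2) * (t ^ 2 * y ^ 2 - z ^ 2))

theorem icosaInvariant_cycle (x y z : R) :
    icosaInvariant t y z x = icosaInvariant t x y z := by
  unfold icosaInvariant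
  ring

theorem icosaInvariantDerivFst_mul_icosaNumerator_cycle_sum (ht : t ^ 2 = t + 1) (x y z : R) :
    icosaInvariantDerivFst t x y z * icosaNumerator t x y z
      + icosaInvariantDerivFst t y z x * icosaNumerator t y z x
      + icosaInvariantDerivFst t z x y * icosaNumerator t z x y = 0 := by
  unfold icosaInvariantDerivFst icosaNumerator
  grind

end CommRing

theorem hasDerivAt_icosaInvariant_fst {𝕜 : Type*} [NontriviallyNormedField 𝕜] (t x y z : 𝕜) :
    HasDerivAt (fun s => icosaInvariant t s y z) (icosaInvariantDerivFst t x y z) x := by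
  have h := ((((hasDerivAt_pow 2 x).const_mul (t ^ 2)).sub_const (y ^ 2)).mul_const
    (t ^ 2 * y ^ 2 - z ^ 2)).mul ((hasDerivAt_pow 2 x).const_sub (t ^ 2 * z ^ 2))
  refine h.congr_deriv ?_
  unfold icosaInvariantDerivFst
  ring

theorem V_cycle (x y z : ℝ) : V y z x = V x y z :=
  icosaInvariant_cycle φ x y z

theorem A_eq_icosaNumerator (x y z : ℝ) : A x y z = icosaNumerator φ x y z := by
  have hsqrt : Real.sqrt 5 = 2 * φ - 1 := by
    unfold φ
    ring
  rw [A, icosaNumerator, hsqrt]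
  ring

theorem deriv_V_fst (x y z : ℝ) :
    deriv (fun s => V s y z) x = icosaInvariantDerivFst φ x y z :=
  (hasDerivAt_icosaInvariant_fst φ x y z).deriv

/-- `V_x·A(x,y,z) + V_y·A(y,z,x) + V_z·A(z,x,y) = 0`, i.e. `V` is a first integral of the
icosahedral vector field `(A(x,y,z), A(y,z,x), A(z,x,y))/(x²+y²+z²)²`. -/
theorem stmt1 (x y z : ℝ) :
    deriv (fun s => V s y z) x * A x y z
      + deriv (fun s => V x s z) y * A y z x
      + deriv (fun s => V x y s) z * A z x y = 0 := by
  have hy : (fun s => V x s z) = fun s => V s z x :=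
    funext fun s => (V_cycle x s z).symm
  have hz : (fun s => V x y s) = fun s => V s x y :=
    funext fun s => V_cycle s x y
  rw [hy, hz, deriv_V_fst, deriv_V_fst, deriv_V_fst, A_eq_icosaNumerator, A_eq_icosaNumerator,
    A_eq_icosaNumerator]
  exact icosaInvariantDerivFst_mul_icosaNumerator_cycle_sum φ Real.goldenRatio_sq x y z
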